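/- Let r_d := rank G_d and let N : Matrix (Fin (p - r_d)) (Fin p ⊕ Fin m_u) K satisfy N * G = 0 and rank N = p - r_d (a basis of the left nullspace of G). Then rank (N * Ḡ_f) = m_f, where Ḡ_f is the (Fin p ⊕ Fin m_u) × Fin m_f matrix whose top block is G_f and bottom block is 0, if and only if rank [G_d G_f] = rank G_d + m_f. (Corollary: strong isolability holds if and only if the fault transfer matrix of the nullspace-reduced system has full column rank m_f, i.e., is left invertible.) -/

import Mathlib

open Matrix Module

/-!
Write `N = [N₁ N₂]`. The equation `N G = 0` says `N₁ G_d = 0` and `N₂ = -N₁ G_u`, so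
`N = N₁ [I, -G_u]`; in particular `rank N₁ = rank N = p - rank G_d` and `N Ḡ_f = N₁ G_f`.
By rank–nullity the column space of `G_d` is then exactly `ker N₁`, and the column space of
`[G_d G_f]` is `ker N₁ + col G_f`, whose dimension is `rank G_d + rank (N₁ G_f)`.
-/

namespace LinearMap

variable {K V W : Type*} [DivisionRing K] [AddCommGroup V] [Module K V] [AddCommGroup W]
  [Module K W]

theorem finrank_map_add_finrank_inf_ker (f : V →ₗ[K] W) (U : Submodule K V)
    [FiniteDimensional K U] :
    finrank K (U.map f) + finrank K ↥(U ⊓ ker f) = finrank K U := by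
  have h := finrank_range_add_finrank_ker (f.domRestrict U)
  rwa [range_domRestrict, ker_domRestrict, ← Submodule.finrank_map_subtype_eq,
    Submodule.map_comap_subtype] at h

theorem finrank_sup_ker (f : V →ₗ[K] W) (U : Submodule K V) [FiniteDimensional K V] :
    finrank K ↥(U ⊔ ker f) = finrank K (U.map f) + finrank K (ker f) := by
  have hU := f.finrank_map_add_finrank_inf_ker U
  have hgrassmann := Submodule.finrank_sup_add_finrank_inf_eq U (ker f)
  omega

end LinearMap

namespace Matrix

section LeftAnnihilatorOfFromBlocks

variable {R l m n o : Type*} [Fintype m] [Fintype n] [DecidableEq n] {N : Matrix l (m ⊕ n) R}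
  {X : Matrix m n R} {Y : Matrix m o R}

theorem toCols₁_mul_eq_zero_of_mul_fromBlocks_eq_zero [Semiring R]
    (h : N * fromBlocks X Y (1 : Matrix n n R) 0 = 0) :
    N.toCols₁ * Y = 0 := by
  rw [← fromCols_toCols N, fromCols_mul_fromBlocks, ← fromCols_zero] at h
  simpa using (fromCols_inj h).2

theorem eq_toCols₁_mul_fromCols_one_neg_of_mul_fromBlocks_eq_zero [Ring R] [DecidableEq m]
    (h : N * fromBlocks X Y (1 : Matrix n n R) 0 = 0) :
    N = N.toCols₁ * fromCols 1 (-X) := by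
  rw [← fromCols_toCols N, fromCols_mul_fromBlocks, ← fromCols_zero] at h
  have hN₂ : N.toCols₁ * X + N.toCols₂ = 0 := by simpa using (fromCols_inj h).1
  rw [mul_fromCols, Matrix.mul_one, Matrix.mul_neg, ← eq_neg_of_add_eq_zero_right hN₂,
    fromCols_toCols]

end LeftAnnihilatorOfFromBlocks

theorem rank_mul_fromCols_one {R l m n : Type*} [CommRing R] [StrongRankCondition R]
    [Fintype m] [Fintype n] [DecidableEq m] (M : Matrix l m R) (X : Matrix m n R) :
    (M * fromCols (1 : Matrix m m R) X).rank = M.rank := by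
  refine le_antisymm (rank_mul_le_left _ _) ?_
  calc M.rank = (M * fromCols 1 X * fromRows (1 : Matrix m m R) (0 : Matrix n m R) :
        Matrix l m R).rank := by
        rw [Matrix.mul_assoc, fromCols_mul_fromRows]; simp
    _ ≤ (M * fromCols 1 X).rank := rank_mul_le_left _ _

theorem range_mulVecLin_fromCols {R m n o : Type*} [CommSemiring R] [Fintype n] [Fintype o]
    (A : Matrix m n R) (B : Matrix m o R) :
    LinearMap.range (fromCols A B).mulVecLin
      = LinearMap.range A.mulVecLin ⊔ LinearMap.range B.mulVecLin := by
  have hcol : (fromCols A B).col = Sum.elim A.col B.col := by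
    ext (j | j) <;> rfl
  rw [range_mulVecLin, range_mulVecLin, range_mulVecLin, ← Submodule.span_union, hcol,
    Set.Sum.elim_range]

section Field

variable {K l m n o : Type*} [Field K] [Fintype m] [Fintype n] [Fintype o]
  {N : Matrix l m K} {A : Matrix m n K}

theorem range_mulVecLin_eq_ker_of_mul_eq_zero (h0 : N * A = 0)
    (hr : N.rank + A.rank = Fintype.card m) :
    LinearMap.range A.mulVecLin = LinearMap.ker N.mulVecLin := by
  refine Submodule.eq_of_le_of_finrank_le ?_ ?_
  · rw [LinearMap.range_le_ker_iff, ← mulVecLin_mul, h0, mulVecLin_zero]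
  · have hnullity := LinearMap.finrank_range_add_finrank_ker N.mulVecLin
    rw [finrank_fintype_fun_eq_card] at hnullity
    unfold rank at hr
    omega

theorem rank_fromCols_eq_rank_add_rank_mul (B : Matrix m o K) (h0 : N * A = 0)
    (hr : N.rank + A.rank = Fintype.card m) :
    (fromCols A B).rank = A.rank + (N * B).rank := by
  have hker := range_mulVecLin_eq_ker_of_mul_eq_zero h0 hr
  calc (fromCols A B).rank
      = finrank K ↥(LinearMap.range B.mulVecLin ⊔ LinearMap.ker N.mulVecLin) := by
        rw [rank, range_mulVecLin_fromCols, hker, sup_comm]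
    _ = A.rank + (N * B).rank := by
        rw [LinearMap.finrank_sup_ker, ← hker, add_comm, rank, rank, mulVecLin_mul,
          LinearMap.range_comp]

end Field

end Matrix

/-- Corollary: strong isolability holds if and only if the fault transfer matrix of the
nullspace-reduced system has full column rank `m_f` (left invertibility). -/
theorem reduced_fault_matrix_full_rank_iff_strong_isolability
    (p m_u m_d m_f : ℕ)
    (G_u : Matrix (Fin p) (Fin m_u) (RatFunc ℝ))
    (G_d : Matrix (Fin p) (Fin m_d) (RatFunc ℝ))
    (G_f : Matrix (Fin p) (Fin m_f) (RatFunc ℝ))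
    (N : Matrix (Fin (p - G_d.rank)) (Fin p ⊕ Fin m_u) (RatFunc ℝ))
    (hN : N * (Matrix.fromBlocks G_u G_d 1 0)
        = (0 : Matrix (Fin (p - G_d.rank)) (Fin m_u ⊕ Fin m_d) (RatFunc ℝ)))
    (hrank : N.rank = p - G_d.rank) :
    (N * (Matrix.fromRows G_f (0 : Matrix (Fin m_u) (Fin m_f) (RatFunc ℝ)))).rank = m_f ↔
    (Matrix.fromCols G_d G_f).rank = G_d.rank + m_f := by
  have hN₁G_d : N.toCols₁ * G_d = 0 := toCols₁_mul_eq_zero_of_mul_fromBlocks_eq_zero hN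
  have hrankN₁ : N.toCols₁.rank = N.rank := by
    conv_rhs => rw [eq_toCols₁_mul_fromCols_one_neg_of_mul_fromBlocks_eq_zero hN]
    exact (rank_mul_fromCols_one _ _).symm
  have hreduced : N * fromRows G_f (0 : Matrix (Fin m_u) (Fin m_f) (RatFunc ℝ))
      = N.toCols₁ * G_f := by
    rw [← fromCols_toCols N, fromCols_mul_fromRows, Matrix.mul_zero, add_zero, toCols₁_fromCols]
  have hsplit := rank_fromCols_eq_rank_add_rank_mul G_f hN₁G_d
    (by rw [hrankN₁, hrank, Fintype.card_fin]; have := G_d.rank_le_height; omega)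
  rw [hreduced]
  omega
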